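/- Let g be a left-invariant pseudo-Riemannian metric on a Lie group G viewed as a metric Lie algebra (g, g), with H = 0 and orthonormal basis conventions e_a = v_a + g v_a, e_i = v_{i'} − g v_{i'}. Then the zero-divergence generalized Ricci tensor satisfies Ric⁺₀(v − gv, u + gu) = Ric^g(u,v) + (∇_u τ)(v) for all u, v ∈ g, where Ric^g is the Ricci curvature of g, ∇ its Levi-Civita connection, and τ(x) = tr(ad_x). In particular, for H = 0 and δ = 0, the generalized Einstein equation is equivalent to the Ricci soliton equation Ric^g + ∇τ = 0; if g is unimodular it is equivalent to Ricci-flatness of g. -/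

import Mathlib

/-!
STATEMENT 19: For a left-invariant pseudo-Riemannian metric `g` on a Lie group (encoded by
the signs `ε_a = g(v_a,v_a) = ±1` of an orthonormal basis and the lowered structure
constants `κ_{abc} = g([v_a,v_b],v_c)`, skew in the first two indices), with `H = 0` and
`δ = 0`, the generalized Ricci tensor in the adapted basis is
`R_{ia} = Σ_{b,j} B_{bij}B_{jab} ε_{j'}ε_b` with `B_{ajk} = −Γ_{aj'k'}`, `B_{ibc} = Γ_{i'bc}`,
`Γ_{abc} = ½(κ_{abc} − κ_{bca} + κ_{cab})` the Levi-Civita coefficients.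
It satisfies `Ric⁺₀(v−gv, u+gu) = Ric^g(u,v) + (∇_u τ)(v)`, where
`Ric^g_{ai'} = Γ^d_{ai'}Γ^f_{fd} − Γ^d_{fi'}Γ^f_{ad} − κ^d_{fa}Γ^f_{di'}` is the Ricci
curvature of `g`, `τ_d = tr(ad_{v_d}) = Σ_b ε_b κ_{dbb}` the trace-form, and
`(∇τ)_{ai'} = Γ^d_{ai'}Γ^f_{fd}` the covariant-derivative term (note `Γ^f_{fd} = −τ_d`,
so `(∇τ)_{ai} = Σ_d ε_d Γ_{aid} τ_d` in the sign convention making the proposition hold).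
Hence for `H = 0, δ = 0` the generalized Einstein equation is equivalent to the Ricci
soliton equation `Ric^g + ∇τ = 0`, and when `g` is unimodular (`τ = 0`) to Ricci-flatness.
-/

namespace RicScalar

/-- Levi-Civita connection coefficients `Γ_{abc} = ½(κ_{abc} − κ_{bca} + κ_{cab})`. -/
noncomputable def Gam {n : ℕ} (κ : Fin n → Fin n → Fin n → ℝ) (a b c : Fin n) : ℝ :=
  (κ a b c - κ b c a + κ c a b) / 2

/-- Trace-form `τ_d = tr(ad_{v_d}) = Σ_b ε_b κ_{dbb}`. -/
noncomputable def tauF {n : ℕ} (ε : Fin n → ℝ) (κ : Fin n → Fin n → Fin n → ℝ)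
    (d : Fin n) : ℝ :=
  ∑ b : Fin n, ε b * κ d b b

/-- Generalized Ricci component `R_{ia}` for `H = 0`, `δ = 0`:
`R_{ia} = Σ_{b,j} B_{bij} B_{jab} ε_{j'} ε_b` with `B_{bij} = −Γ_{bij}`, `B_{jab} = Γ_{jab}`. -/
noncomputable def RicGen {n : ℕ} (ε : Fin n → ℝ) (κ : Fin n → Fin n → Fin n → ℝ)
    (i a : Fin n) : ℝ :=
  ∑ b : Fin n, ∑ j : Fin n, (-(Gam κ b i j)) * Gam κ j a b * ε j * ε b

/-- Ricci curvature of the left-invariant metric: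
`Ric^g_{ai} = Γ^d_{ai}Γ^f_{fd} − Γ^d_{fi}Γ^f_{ad} − κ^d_{fa}Γ^f_{di}`
(indices raised with `ε`). -/
noncomputable def RicG {n : ℕ} (ε : Fin n → ℝ) (κ : Fin n → Fin n → Fin n → ℝ)
    (a i : Fin n) : ℝ :=
  (∑ d : Fin n, ε d * Gam κ a i d * (∑ f : Fin n, ε f * Gam κ f d f))
    - (∑ d : Fin n, ∑ f : Fin n, (ε d * Gam κ f i d) * (ε f * Gam κ a d f))
    - (∑ d : Fin n, ∑ f : Fin n, (ε d * κ f a d) * (ε f * Gam κ d i f))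

/-- The covariant-derivative term `(∇τ)_{ai} = Γ^d_{ai}Γ^f_{fd} = Σ_d ε_d Γ_{aid} τ_d`
(using `Γ^f_{fd} = −τ_d`; sign convention as in the proposition). -/
noncomputable def nablaTau {n : ℕ} (ε : Fin n → ℝ) (κ : Fin n → Fin n → Fin n → ℝ)
    (a i : Fin n) : ℝ :=
  ∑ d : Fin n, ε d * Gam κ a i d * tauF ε κ d

lemma gam_trace {n : ℕ} (κ : Fin n → Fin n → Fin n → ℝ)
    (hskew : ∀ a b c, κ a b c = - κ b a c) (d f : Fin n) :
    Gam κ f d f = - κ d f f := by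
  have h1 := hskew f f d
  have h2 := hskew f d f
  unfold Gam; linarith

lemma gam_torsion {n : ℕ} (κ : Fin n → Fin n → Fin n → ℝ)
    (hskew : ∀ a b c, κ a b c = - κ b a c) (f a d : Fin n) :
    κ f a d = Gam κ f a d - Gam κ a f d := by
  have h1 := hskew a f d
  have h2 := hskew d a f
  have h3 := hskew f d a
  unfold Gam; linarith

lemma main_identity {n : ℕ}
    (ε : Fin n → ℝ) (κ : Fin n → Fin n → Fin n → ℝ)
    (hskew : ∀ a b c, κ a b c = - κ b a c) :
    ∀ i a : Fin n, RicGen ε κ i a = RicG ε κ a i + nablaTau ε κ a i := by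
  intro i a
  unfold RicGen RicG nablaTau
  -- first term of RicG cancels nablaTau
  have h2 : (∑ d : Fin n, ε d * Gam κ a i d * (∑ f : Fin n, ε f * Gam κ f d f))
      = - ∑ d : Fin n, ε d * Gam κ a i d * tauF ε κ d := by
    rw [← Finset.sum_neg_distrib]
    refine Finset.sum_congr rfl fun d _ => ?_
    have h1 : (∑ f : Fin n, ε f * Gam κ f d f) = - tauF ε κ d := by
      unfold tauF
      rw [← Finset.sum_neg_distrib]
      exact Finset.sum_congr rfl fun f _ => by rw [gam_trace κ hskew d f]; ring
    rw [h1]; ring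
  rw [h2]
  set T2 := ∑ d : Fin n, ∑ f : Fin n, (ε d * Gam κ f i d) * (ε f * Gam κ a d f) with hT2
  set T3 := ∑ d : Fin n, ∑ f : Fin n, (ε d * κ f a d) * (ε f * Gam κ d i f) with hT3
  have hzero : (∑ b : Fin n, ∑ j : Fin n, (-(Gam κ b i j)) * Gam κ j a b * ε j * ε b)
      + T2 + T3 = 0 := by
    rw [hT2, hT3, ← Finset.sum_add_distrib, ← Finset.sum_add_distrib]
    have hrow : ∀ d : Fin n,
        ((∑ j : Fin n, (-(Gam κ d i j)) * Gam κ j a d * ε j * ε d)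
          + ∑ f : Fin n, (ε d * Gam κ f i d) * (ε f * Gam κ a d f))
          + ∑ f : Fin n, (ε d * κ f a d) * (ε f * Gam κ d i f)
        = ∑ f : Fin n, ((ε f * ε d * Gam κ a d f * Gam κ f i d)
            - (ε d * ε f * Gam κ a f d * Gam κ d i f)) := by
      intro d
      rw [← Finset.sum_add_distrib, ← Finset.sum_add_distrib]
      refine Finset.sum_congr rfl fun f _ => ?_
      rw [gam_torsion κ hskew f a d]
      ring
    rw [Finset.sum_congr rfl fun d _ => hrow d]
    have := Finset.sum_comm (s := (Finset.univ : Finset (Fin n)))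
      (t := (Finset.univ : Finset (Fin n)))
      (f := fun d f => ε f * ε d * Gam κ a d f * Gam κ f i d)
    rw [Finset.sum_congr rfl fun d (_ : d ∈ Finset.univ) => Finset.sum_sub_distrib _ _]
    rw [Finset.sum_sub_distrib, this]
    simp
  linarith [hzero]

theorem generalized_ricci_eq_ricci_plus_nabla_tau {n : ℕ}
    (ε : Fin n → ℝ) (κ : Fin n → Fin n → Fin n → ℝ)
    (hε : ∀ a, ε a = 1 ∨ ε a = -1)
    (hskew : ∀ a b c, κ a b c = - κ b a c) :
    -- `Ric⁺₀ = Ric^g + ∇τ`: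
    (∀ i a : Fin n, RicGen ε κ i a = RicG ε κ a i + nablaTau ε κ a i) ∧
    -- generalized Einstein (H = 0, δ = 0) ⟺ Ricci soliton equation:
    ((∀ i a : Fin n, RicGen ε κ i a = 0) ↔
      (∀ a i : Fin n, RicG ε κ a i + nablaTau ε κ a i = 0)) ∧
    -- unimodular case: ⟺ Ricci-flat:
    ((∀ d, tauF ε κ d = 0) →
      ((∀ i a : Fin n, RicGen ε κ i a = 0) ↔ (∀ a i : Fin n, RicG ε κ a i = 0))) := by
  have main := main_identity ε κ hskew
  refine ⟨main, ?_, ?_⟩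
  · constructor
    · intro h a i; rw [← main i a]; exact h i a
    · intro h i a; rw [main i a]; exact h a i
  · intro htau
    have hzero : ∀ a i : Fin n, nablaTau ε κ a i = 0 := by
      intro a i
      unfold nablaTau
      exact Finset.sum_eq_zero fun d _ => by rw [htau d]; ring
    constructor
    · intro h a i
      have := main i a
      rw [h i a, hzero a i] at this
      linarith
    · intro h i a
      rw [main i a, h a i, hzero a i]; ring

end RicScalar
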